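/- (Intermediate variational inequality (3.18) in the proof of Proposition 3.1.) Under the hypotheses of the first part of Proposition 3.1 — namely: (U, μ) a finite measure space, p_s ∈ L²(U) measurable, Zⁿ = τ(p_fⁿ) Dⁿ/(|Dⁿ| + 1/n) a.e. with τ(p) := (p_s − p)⁺, Zⁿ ⇀ Z and Dⁿ ⇀ D weakly in L²(U; M₃), p_fⁿ → p_f strongly in L²(U) and a.e., and limsup_{n→∞} ∫_U Zⁿ : Dⁿ dμ ≤ ∫_U Z : D dμ — the limit objects satisfy: for every A ∈ L²(U; M₃) with A ≠ 0 a.e. in U, ∫_U ( Z − τ(p_f) A/|A| ) : (D − A) dμ ≥ 0. -/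

import Mathlib

open MeasureTheory Filter
open scoped RealInnerProductSpace Topology ENNReal

abbrev M3 := EuclideanSpace ℝ (Fin 3 × Fin 3)

/-!
Minty's trick. Pointwise, `Zⁿ = τ(p_fⁿ) Dⁿ/(|Dⁿ| + 1/(n+1))` is an approximate subgradient of
`τ(p_fⁿ) |·|` at `Dⁿ`, which gives `(Zⁿ − τ(p_fⁿ) A/|A|) : (Dⁿ − A) ≥ −τ(p_fⁿ)/(n+1)`.
Integrate and pass to the limit in `L²`: the term `∫ Zⁿ : Dⁿ` is handled by the `limsup`
hypothesis, `τ(p_fⁿ) A/|A|` converges strongly so its pairing with the weakly convergent `Dⁿ`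
converges, and weakly convergent sequences are bounded by the uniform boundedness principle.
-/

section Hilbert

variable {H : Type*} [NormedAddCommGroup H] [InnerProductSpace ℝ H]

theorem exists_norm_le_of_tendsto_inner [CompleteSpace H] {d : ℕ → H} {d₀ : H}
    (hd : ∀ v, Tendsto (fun n => ⟪d n, v⟫) atTop (𝓝 ⟪d₀, v⟫)) :
    ∃ C, ∀ n, ‖d n‖ ≤ C := by
  have hbdd : ∀ v, ∃ C, ∀ n, ‖innerSL ℝ (d n) v‖ ≤ C := fun v => by
    obtain ⟨C, hC⟩ := (hd v).norm.bddAbove_range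
    exact ⟨C, fun n => hC (Set.mem_range_self n)⟩
  obtain ⟨C, hC⟩ := banach_steinhaus hbdd
  exact ⟨C, fun n => by simpa using hC n⟩

theorem tendsto_inner_of_tendsto_of_weak [CompleteSpace H] {w d : ℕ → H} {w₀ d₀ : H}
    (hw : Tendsto w atTop (𝓝 w₀))
    (hd : ∀ v, Tendsto (fun n => ⟪d n, v⟫) atTop (𝓝 ⟪d₀, v⟫)) :
    Tendsto (fun n => ⟪w n, d n⟫) atTop (𝓝 ⟪w₀, d₀⟫) := by
  obtain ⟨C, hC⟩ := exists_norm_le_of_tendsto_inner hd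
  have hsmall : Tendsto (fun n => ⟪w n - w₀, d n⟫) atTop (𝓝 0) := by
    refine squeeze_zero_norm (fun n => ?_)
      (by simpa using (tendsto_sub_nhds_zero_iff.2 hw).norm.mul_const C)
    calc ‖⟪w n - w₀, d n⟫‖ ≤ ‖w n - w₀‖ * ‖d n‖ := norm_inner_le_norm _ _
      _ ≤ ‖w n - w₀‖ * C := by gcongr; exact hC n
  have hfixed : Tendsto (fun n => ⟪w₀, d n⟫) atTop (𝓝 ⟪w₀, d₀⟫) := by
    simpa only [real_inner_comm w₀] using hd w₀
  simpa [inner_sub_left] using hsmall.add hfixed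

theorem inner_sub_sub_nonneg_of_limsup_le [CompleteSpace H] {z d w : ℕ → H} {z₀ d₀ w₀ a : H}
    {ε : ℕ → ℝ}
    (hz : ∀ v, Tendsto (fun n => ⟪z n, v⟫) atTop (𝓝 ⟪z₀, v⟫))
    (hd : ∀ v, Tendsto (fun n => ⟪d n, v⟫) atTop (𝓝 ⟪d₀, v⟫))
    (hw : Tendsto w atTop (𝓝 w₀)) (hε : Tendsto ε atTop (𝓝 0))
    (hlimsup : limsup (fun n => ⟪z n, d n⟫) atTop ≤ ⟪z₀, d₀⟫)
    (hmono : ∀ n, -ε n ≤ ⟪z n - w n, d n - a⟫) :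
    0 ≤ ⟪z₀ - w₀, d₀ - a⟫ := by
  obtain ⟨Cz, hCz⟩ := exists_norm_le_of_tendsto_inner hz
  obtain ⟨Cd, hCd⟩ := exists_norm_le_of_tendsto_inner hd
  have hbdd : IsBoundedUnder (· ≤ ·) atTop (fun n => ⟪z n, d n⟫) :=
    isBoundedUnder_of ⟨Cz * Cd, fun n => (real_inner_le_norm _ _).trans
      (mul_le_mul (hCz n) (hCd n) (norm_nonneg _) ((norm_nonneg _).trans (hCz n)))⟩
  have hda : ∀ v, Tendsto (fun n => ⟪d n - a, v⟫) atTop (𝓝 ⟪d₀ - a, v⟫) := fun v => by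
    simpa only [inner_sub_left] using (hd v).sub_const ⟪a, v⟫
  have hlower : Tendsto (fun n => ⟪z n, a⟫ + ⟪w n, d n - a⟫ - ε n) atTop
      (𝓝 (⟪z₀, a⟫ + ⟪w₀, d₀ - a⟫)) := by
    simpa using ((hz a).add (tendsto_inner_of_tendsto_of_weak hw hda)).sub hε
  have hle : ⟪z₀, a⟫ + ⟪w₀, d₀ - a⟫ ≤ ⟪z₀, d₀⟫ := by
    refine le_trans ?_ hlimsup
    rw [← hlower.limsup_eq]
    refine limsup_le_limsup (Eventually.of_forall fun n => ?_)
      hlower.isBoundedUnder_ge.isCoboundedUnder_le hbdd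
    have := hmono n
    simp only [inner_sub_left, inner_sub_right] at this ⊢
    linarith
  simp only [inner_sub_left, inner_sub_right] at hle ⊢
  linarith

end Hilbert

section Pointwise

variable {E : Type*} [NormedAddCommGroup E] [InnerProductSpace ℝ E]

theorem norm_div_norm_smul_le (t : ℝ) (a : E) : ‖(t / ‖a‖) • a‖ ≤ |t| := by
  rcases eq_or_ne a 0 with rfl | ha
  · simp
  · rw [norm_smul, norm_div, norm_norm, div_mul_cancel₀ _ (norm_ne_zero_iff.2 ha),
      Real.norm_eq_abs]

theorem neg_mul_le_inner_regularized_sub {t e : ℝ} (ht : 0 ≤ t) (he : 0 < e) (d a : E) :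
    -(e * t) ≤ ⟪(t / (‖d‖ + e)) • d - (t / ‖a‖) • a, d - a⟫ := by
  set c := t / (‖d‖ + e)
  have hde : 0 < ‖d‖ + e := by positivity
  have hc : 0 ≤ c := by positivity
  have htc : t = c * (‖d‖ + e) := (div_mul_cancel₀ t hde.ne').symm
  have hda : c * ⟪d, a⟫ ≤ c * (‖d‖ * ‖a‖) := mul_le_mul_of_nonneg_left (real_inner_le_norm _ _) hc
  have had : ⟪(t / ‖a‖) • a, d⟫ ≤ t * ‖d‖ := by
    calc ⟪(t / ‖a‖) • a, d⟫ ≤ ‖(t / ‖a‖) • a‖ * ‖d‖ := real_inner_le_norm _ _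
      _ ≤ t * ‖d‖ := by
        gcongr
        simpa [abs_of_nonneg ht] using norm_div_norm_smul_le t a
  have haa : ⟪(t / ‖a‖) • a, a⟫ = t * ‖a‖ := by
    rcases eq_or_ne a 0 with rfl | ha
    · simp
    · rw [real_inner_smul_left, real_inner_self_eq_norm_sq]
      field_simp
  rw [inner_sub_left, inner_sub_right, inner_sub_right, haa, real_inner_smul_left,
    real_inner_smul_left, real_inner_self_eq_norm_sq]
  -- with `t = c (‖d‖ + e)` the lower bound collapses to `c e (‖a‖ - ‖d‖) ≥ -e t`
  have htd : t * ‖d‖ = c * ‖d‖ ^ 2 + c * e * ‖d‖ := by rw [htc]; ring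
  have hta : t * ‖a‖ = c * ‖d‖ * ‖a‖ + c * e * ‖a‖ := by rw [htc]; ring
  have het : e * t = c * e * ‖d‖ + c * e * e := by rw [htc]; ring
  linarith [mul_nonneg (mul_nonneg hc he.le) (norm_nonneg a),
    mul_nonneg (mul_nonneg hc he.le) he.le]

end Pointwise

section YieldStress

variable {U : Type*}

def yieldStress (ps p : U → ℝ) (x : U) : ℝ := max (ps x - p x) 0

theorem yieldStress_nonneg (ps p : U → ℝ) (x : U) : 0 ≤ yieldStress ps p x := le_max_right _ _

theorem abs_yieldStress_sub_le (ps p q : U → ℝ) (x : U) :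
    |yieldStress ps p x - yieldStress ps q x| ≤ |p x - q x| := by
  refine (abs_max_sub_max_le_abs _ _ _).trans_eq ?_
  rw [sub_sub_sub_cancel_left, abs_sub_comm]

theorem MeasureTheory.MemLp.yieldStress [MeasurableSpace U] {μ : Measure U} {p' : ℝ≥0∞}
    {ps p : U → ℝ} (hps : MemLp ps p' μ) (hp : MemLp p p' μ) : MemLp (yieldStress ps p) p' μ :=
  (hps.sub hp).pos_part

end YieldStress

section L2

variable {U : Type*} [MeasurableSpace U] {μ : Measure U}

theorem tendsto_toLp_of_norm_sub_le {p : ℝ≥0∞} [Fact (1 ≤ p)] {E F : Type*}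
    [NormedAddCommGroup E] [NormedAddCommGroup F] {f : ℕ → U → E} {f₀ : U → E}
    {g : ℕ → U → F} {g₀ : U → F} (hf : ∀ n, MemLp (f n) p μ) (hf₀ : MemLp f₀ p μ)
    (hle : ∀ n x, ‖f n x - f₀ x‖ ≤ ‖g n x - g₀ x‖)
    (hg : Tendsto (fun n => eLpNorm (g n - g₀) p μ) atTop (𝓝 0)) :
    Tendsto (fun n => (hf n).toLp (f n)) atTop (𝓝 (hf₀.toLp f₀)) := by
  rw [Lp.tendsto_Lp_iff_tendsto_eLpNorm'']
  exact tendsto_of_tendsto_of_tendsto_of_le_of_le tendsto_const_nhds hg (fun _ => zero_le)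
    fun n => eLpNorm_mono fun x => hle n x

variable {E : Type*} [NormedAddCommGroup E] [InnerProductSpace ℝ E]

theorem MeasureTheory.MemLp.integral_inner_eq_inner_toLp {f g : U → E} (hf : MemLp f 2 μ)
    (hg : MemLp g 2 μ) : ∫ x, ⟪f x, g x⟫ ∂μ = ⟪hf.toLp f, hg.toLp g⟫ := by
  rw [L2.inner_def]
  refine integral_congr_ae ?_
  filter_upwards [hf.coeFn_toLp, hg.coeFn_toLp] with x hfx hgx
  rw [hfx, hgx]

theorem MeasureTheory.MemLp.integral_inner_sub_sub_eq {f g k l : U → E} (hf : MemLp f 2 μ)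
    (hg : MemLp g 2 μ) (hk : MemLp k 2 μ) (hl : MemLp l 2 μ) :
    ∫ x, ⟪f x - g x, k x - l x⟫ ∂μ = ⟪hf.toLp f - hg.toLp g, hk.toLp k - hl.toLp l⟫ := by
  rw [← MemLp.toLp_sub, ← MemLp.toLp_sub]
  exact (hf.sub hg).integral_inner_eq_inner_toLp (hk.sub hl)

theorem MeasureTheory.MemLp.integrable_inner {f g : U → E} (hf : MemLp f 2 μ)
    (hg : MemLp g 2 μ) : Integrable (fun x => ⟪f x, g x⟫) μ := by
  refine (L2.integrable_inner (hf.toLp f) (hg.toLp g)).congr ?_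
  filter_upwards [hf.coeFn_toLp, hg.coeFn_toLp] with x hfx hgx
  rw [hfx, hgx]

theorem tendsto_inner_toLp_of_tendsto_integral_inner {f : ℕ → U → E} {f₀ : U → E}
    (hf : ∀ n, MemLp (f n) 2 μ) (hf₀ : MemLp f₀ 2 μ)
    (hweak : ∀ A : U → E, MemLp A 2 μ →
      Tendsto (fun n => ∫ x, ⟪f n x, A x⟫ ∂μ) atTop (𝓝 (∫ x, ⟪f₀ x, A x⟫ ∂μ)))
    (v : Lp E 2 μ) :
    Tendsto (fun n => ⟪(hf n).toLp (f n), v⟫) atTop (𝓝 ⟪hf₀.toLp f₀, v⟫) := by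
  have hv := Lp.memLp v
  simpa only [fun n => (hf n).integral_inner_eq_inner_toLp hv,
    hf₀.integral_inner_eq_inner_toLp hv, Lp.toLp_coeFn] using hweak v hv

theorem tendsto_integral_of_tendsto_toLp [IsFiniteMeasure μ] {f : ℕ → U → ℝ} {f₀ : U → ℝ}
    (hf : ∀ n, MemLp (f n) 2 μ) (hf₀ : MemLp f₀ 2 μ)
    (h : Tendsto (fun n => (hf n).toLp (f n)) atTop (𝓝 (hf₀.toLp f₀))) :
    Tendsto (fun n => ∫ x, f n x ∂μ) atTop (𝓝 (∫ x, f₀ x ∂μ)) := by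
  have h1 : MemLp (fun _ : U => (1 : ℝ)) 2 μ := memLp_const 1
  simpa only [← MemLp.integral_inner_eq_inner_toLp, Real.inner_apply, mul_one] using
    h.inner (𝕜 := ℝ) (tendsto_const_nhds (x := h1.toLp _))

theorem MeasureTheory.MemLp.div_norm_smul {f : U → ℝ} {A : U → E} (hf : MemLp f 2 μ)
    (hA : AEStronglyMeasurable A μ) : MemLp (fun x => (f x / ‖A x‖) • A x) 2 μ :=
  hf.of_le ((hf.1.aemeasurable.div hA.norm.aemeasurable).aestronglyMeasurable.smul hA)
    (Eventually.of_forall fun x => by simpa using norm_div_norm_smul_le (f x) (A x))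

end L2

theorem intermediate_variational_inequality_general
    {U : Type*} [MeasurableSpace U] (μ : Measure U) [IsFiniteMeasure μ]
    (ps : U → ℝ) (hps_mem : MemLp ps 2 μ)
    (Z D : ℕ → U → M3) (pf : ℕ → U → ℝ)
    (Zlim Dlim : U → M3) (pflim : U → ℝ)
    (hZ_mem : ∀ n, MemLp (Z n) 2 μ) (hD_mem : ∀ n, MemLp (D n) 2 μ)
    (hpf_mem : ∀ n, MemLp (pf n) 2 μ)
    (hZlim_mem : MemLp Zlim 2 μ) (hDlim_mem : MemLp Dlim 2 μ)
    (hpflim_mem : MemLp pflim 2 μ)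
    (hZn : ∀ n : ℕ, ∀ᵐ x ∂μ,
      Z n x = (max (ps x - pf n x) 0 / (‖D n x‖ + 1 / (n + 1))) • D n x)
    (hZ_weak : ∀ A : U → M3, MemLp A 2 μ →
      Tendsto (fun n => ∫ x, ⟪Z n x, A x⟫ ∂μ) atTop (𝓝 (∫ x, ⟪Zlim x, A x⟫ ∂μ)))
    (hD_weak : ∀ A : U → M3, MemLp A 2 μ →
      Tendsto (fun n => ∫ x, ⟪D n x, A x⟫ ∂μ) atTop (𝓝 (∫ x, ⟪Dlim x, A x⟫ ∂μ)))
    (hpf_strong : Tendsto (fun n => eLpNorm (pf n - pflim) 2 μ) atTop (𝓝 0))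
    (hlimsup : limsup (fun n => ∫ x, ⟪Z n x, D n x⟫ ∂μ) atTop
      ≤ ∫ x, ⟪Zlim x, Dlim x⟫ ∂μ) :
    ∀ A : U → M3, MemLp A 2 μ → (∀ᵐ x ∂μ, A x ≠ 0) →
      0 ≤ ∫ x, ⟪Zlim x - (max (ps x - pflim x) 0 / ‖A x‖) • A x, Dlim x - A x⟫ ∂μ := by
  intro A hA _
  have hτn (n : ℕ) : MemLp (yieldStress ps (pf n)) 2 μ := hps_mem.yieldStress (hpf_mem n)
  have hτ : MemLp (yieldStress ps pflim) 2 μ := hps_mem.yieldStress hpflim_mem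
  have hW (n : ℕ) := (hτn n).div_norm_smul hA.1
  have hW₀ := hτ.div_norm_smul hA.1
  have hε : Tendsto (fun n : ℕ => 1 / ((n : ℝ) + 1) * ∫ x, yieldStress ps (pf n) x ∂μ) atTop
      (𝓝 0) := by
    simpa using tendsto_one_div_add_atTop_nhds_zero_nat.mul (tendsto_integral_of_tendsto_toLp hτn hτ
      (tendsto_toLp_of_norm_sub_le hτn hτ (fun n x => abs_yieldStress_sub_le _ _ _ x) hpf_strong))
  have hmono (n : ℕ) : -(1 / ((n : ℝ) + 1) * ∫ x, yieldStress ps (pf n) x ∂μ) ≤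
      ⟪(hZ_mem n).toLp (Z n) - (hW n).toLp _, (hD_mem n).toLp (D n) - hA.toLp A⟫ := by
    rw [← (hZ_mem n).integral_inner_sub_sub_eq (hW n) (hD_mem n) hA, ← integral_const_mul,
      ← integral_neg]
    refine integral_mono_ae (((hτn n).integrable one_le_two).const_mul _).neg
      (((hZ_mem n).sub (hW n)).integrable_inner ((hD_mem n).sub hA)) ?_
    filter_upwards [hZn n] with x hx
    rw [hx]
    exact neg_mul_le_inner_regularized_sub (yieldStress_nonneg _ _ x) (by positivity) _ _
  have hW_tendsto := tendsto_toLp_of_norm_sub_le hW hW₀ (fun n x => by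
    rw [← sub_smul, ← sub_div]
    exact (norm_div_norm_smul_le _ _).trans (abs_yieldStress_sub_le _ _ _ x)) hpf_strong
  simp only [fun n => (hZ_mem n).integral_inner_eq_inner_toLp (hD_mem n),
    hZlim_mem.integral_inner_eq_inner_toLp hDlim_mem] at hlimsup
  have key := inner_sub_sub_nonneg_of_limsup_le
    (tendsto_inner_toLp_of_tendsto_integral_inner hZ_mem hZlim_mem hZ_weak)
    (tendsto_inner_toLp_of_tendsto_integral_inner hD_mem hDlim_mem hD_weak)
    hW_tendsto hε hlimsup hmono
  rwa [← hZlim_mem.integral_inner_sub_sub_eq hW₀ hDlim_mem hA] at key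

/-- Intermediate variational inequality (3.18) in the proof of Proposition 3.1: under the
hypotheses of the first part of the convergence lemma, the limit objects satisfy
`∫ (Z − τ(p_f) A/|A|) : (D − A) dμ ≥ 0` for every `A ∈ L²(U; M₃)` with `A ≠ 0` a.e.
(Sequences are indexed by `n : ℕ`, the regularization parameter being `1/(n+1)`.) -/
theorem intermediate_variational_inequality
    {U : Type*} [MeasurableSpace U] (μ : Measure U) [IsFiniteMeasure μ]
    (ps : U → ℝ) (hps_meas : Measurable ps) (hps_mem : MemLp ps 2 μ)
    (Z D : ℕ → U → M3) (pf : ℕ → U → ℝ)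
    (Zlim Dlim : U → M3) (pflim : U → ℝ)
    (hZ_mem : ∀ n, MemLp (Z n) 2 μ) (hD_mem : ∀ n, MemLp (D n) 2 μ)
    (hpf_mem : ∀ n, MemLp (pf n) 2 μ)
    (hZlim_mem : MemLp Zlim 2 μ) (hDlim_mem : MemLp Dlim 2 μ)
    (hpflim_mem : MemLp pflim 2 μ)
    (hZn : ∀ n : ℕ, ∀ᵐ x ∂μ,
      Z n x = (max (ps x - pf n x) 0 / (‖D n x‖ + 1 / (n + 1))) • D n x)
    (hZ_weak : ∀ A : U → M3, MemLp A 2 μ →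
      Tendsto (fun n => ∫ x, ⟪Z n x, A x⟫ ∂μ) atTop (𝓝 (∫ x, ⟪Zlim x, A x⟫ ∂μ)))
    (hD_weak : ∀ A : U → M3, MemLp A 2 μ →
      Tendsto (fun n => ∫ x, ⟪D n x, A x⟫ ∂μ) atTop (𝓝 (∫ x, ⟪Dlim x, A x⟫ ∂μ)))
    (hpf_strong : Tendsto (fun n => eLpNorm (pf n - pflim) 2 μ) atTop (𝓝 0))
    (hpf_ae : ∀ᵐ x ∂μ, Tendsto (fun n => pf n x) atTop (𝓝 (pflim x)))
    (hlimsup : limsup (fun n => ∫ x, ⟪Z n x, D n x⟫ ∂μ) atTop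
      ≤ ∫ x, ⟪Zlim x, Dlim x⟫ ∂μ) :
    ∀ A : U → M3, MemLp A 2 μ → (∀ᵐ x ∂μ, A x ≠ 0) →
      0 ≤ ∫ x, ⟪Zlim x - (max (ps x - pflim x) 0 / ‖A x‖) • A x, Dlim x - A x⟫ ∂μ :=
  intermediate_variational_inequality_general μ ps hps_mem Z D pf Zlim Dlim pflim hZ_mem hD_mem
    hpf_mem hZlim_mem hDlim_mem hpflim_mem hZn hZ_weak hD_weak hpf_strong hlimsup
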